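/- For integers 1 ≤ k ≤ n, the polynomial (1−D)^n x^k has degree k, is real-rooted, and its smallest root is at least (1 − √(k/n))² · n = (√n − √k)². -/

import Mathlib

/-!
The operator `1 - D` keeps the degree and preserves real-rootedness. Since
`(1 - D) p = -eˣ (e⁻ˣ p)'`, Rolle's theorem puts a root of `(1 - D) p` strictly between
any two roots of `p`; a root of multiplicity `m` of `p` has multiplicity `≥ m - 1` in
`(1 - D) p`; and the one root still unaccounted for is real, because a real polynomial of
degree one has a root.

For the root bound we use the lower barrier `Φ_p(b) = ∑ᵣ 1 / (r - b)` of Marcus, Spielman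
and Srivastava. If the roots of `p` exceed `b` and `Φ_p(b) ≤ φ`, then the roots of
`(1 - D) p` exceed `b + 1 / (1 + φ)` and `Φ_{(1 - D) p}(b + 1 / (1 + φ)) ≤ Φ_p(b)`, by a
Cauchy–Schwarz estimate. Starting from `xᵏ` at `b = -k / φ`, where `Φ = φ`, after `n` steps
all roots of `(1 - D)ⁿ xᵏ` exceed `n / (1 + φ) - k / φ`; the choice `φ = √k / (√n - √k)`
turns this into `(√n - √k)²`.
-/

open Polynomial

/-- A real polynomial is real-rooted if it splits over `ℝ`
(equivalently, all of its complex roots are real). -/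
def RealRooted (p : Polynomial ℝ) : Prop := p.Splits

/-- The operator `(1 - D) f = f - f'` on univariate real polynomials. -/
noncomputable def oneSubD (f : Polynomial ℝ) : Polynomial ℝ :=
  f - Polynomial.derivative f

open Set Real

theorem card_roots_le_card_roots_add_one_of_interleaved {p q : ℝ[X]} (hq : q ≠ 0)
    (hmult : ∀ x, p.rootMultiplicity x - 1 ≤ q.rootMultiplicity x)
    (hbetween : ∀ x y, p.IsRoot x → p.IsRoot y → x < y → ∃ z ∈ Ioo x y, q.IsRoot z) :
    Multiset.card p.roots ≤ Multiset.card q.roots + 1 :=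
  have hsimple : p.roots.toFinset.card ≤ (q.roots.toFinset \ p.roots.toFinset).card + 1 := by
    refine Finset.card_le_sdiff_of_interleaved fun x hx y hy hxy _ => ?_
    rw [Multiset.mem_toFinset, mem_roots'] at hx hy
    obtain ⟨z, hz, hqz⟩ := hbetween x y hx.2 hy.2 hxy
    exact ⟨z, by rwa [Multiset.mem_toFinset, mem_roots hq], hz⟩
  calc
    Multiset.card p.roots = ∑ x ∈ p.roots.toFinset, p.roots.count x :=
      (Multiset.toFinset_sum_count_eq _).symm
    _ = ∑ x ∈ p.roots.toFinset, (p.roots.count x - 1 + 1) :=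
      (Eq.symm <| Finset.sum_congr rfl fun _ hx => tsub_add_cancel_of_le <|
        Nat.succ_le_iff.2 <| Multiset.count_pos.2 <| Multiset.mem_toFinset.1 hx)
    _ = (∑ x ∈ p.roots.toFinset, (p.rootMultiplicity x - 1)) + p.roots.toFinset.card := by
      simp only [Finset.sum_add_distrib, Finset.card_eq_sum_ones, count_roots]
    _ ≤ (∑ x ∈ p.roots.toFinset, q.rootMultiplicity x) +
          ((q.roots.toFinset \ p.roots.toFinset).card + 1) :=
      add_le_add (Finset.sum_le_sum fun x _ => hmult x) hsimple
    _ ≤ (∑ x ∈ p.roots.toFinset, q.roots.count x) +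
          ((∑ x ∈ q.roots.toFinset \ p.roots.toFinset, q.roots.count x) + 1) := by
      simp only [← count_roots, Finset.card_eq_sum_ones]
      gcongr with x hx
      rw [Nat.succ_le_iff, Multiset.count_pos, ← Multiset.mem_toFinset]
      exact (Finset.mem_sdiff.1 hx).1
    _ = Multiset.card q.roots + 1 := by
      rw [← add_assoc, ← Finset.sum_union Finset.disjoint_sdiff,
        Finset.union_sdiff_self_eq_union,
        ← Multiset.toFinset_sum_count_eq, ← Finset.sum_subset Finset.subset_union_right]
      intro x _ hx
      simpa only [Multiset.mem_toFinset, Multiset.count_eq_zero] using hx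

theorem splits_of_natDegree_le_card_roots_add_one {p : ℝ[X]}
    (h : p.natDegree ≤ Multiset.card p.roots + 1) : p.Splits := by
  obtain ⟨q, hpq, hdeg, hq⟩ := p.exists_prod_multiset_X_sub_C_mul
  have hq1 : q.natDegree ≠ 1 := fun hq1 => by
    obtain ⟨x, hx⟩ :=
      exists_root_of_degree_eq_one ((degree_eq_iff_natDegree_eq_of_pos one_pos).mpr hq1)
    have hq0 : q ≠ 0 := by rintro rfl; simp at hq1
    simpa [hq] using (mem_roots hq0).mpr hx
  exact splits_iff_card_roots.mpr (by omega)

theorem eval_derivative_multiset_prod_X_sub_C {K : Type*} [Field K] {s : Multiset K} {b : K}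
    (hb : b ∉ s) :
    eval b (derivative (s.map (X - C ·)).prod) =
      -(eval b (s.map (X - C ·)).prod * (s.map fun r => (r - b)⁻¹).sum) := by
  induction s using Multiset.induction_on with
  | empty => simp
  | cons a s ih =>
    rw [Multiset.mem_cons, not_or] at hb
    have hab : a - b ≠ 0 := sub_ne_zero.mpr (Ne.symm hb.1)
    simp only [Multiset.map_cons, Multiset.prod_cons, Multiset.sum_cons, derivative_mul,
      derivative_X_sub_C, eval_add, eval_mul, eval_sub, eval_X, eval_C, one_mul, ih hb.2]
    field_simp
    ring

theorem eval_derivative_derivative_multiset_prod_X_sub_C {K : Type*} [Field K] {s : Multiset K}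
    {b : K} (hb : b ∉ s) :
    eval b (derivative (derivative (s.map (X - C ·)).prod)) =
      eval b (s.map (X - C ·)).prod *
        ((s.map fun r => (r - b)⁻¹).sum ^ 2 - (s.map fun r => (r - b)⁻¹ ^ 2).sum) := by
  induction s using Multiset.induction_on with
  | empty => simp
  | cons a s ih =>
    rw [Multiset.mem_cons, not_or] at hb
    have hab : a - b ≠ 0 := sub_ne_zero.mpr (Ne.symm hb.1)
    simp only [Multiset.map_cons, Multiset.prod_cons, Multiset.sum_cons, derivative_mul,
      derivative_X_sub_C, derivative_add, eval_add, eval_mul, eval_sub, eval_X, eval_C, one_mul,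
      ih hb.2, eval_derivative_multiset_prod_X_sub_C hb.2]
    field_simp
    ring

theorem Multiset.sq_sum_map_mul_le {ι R : Type*} [CommSemiring R] [LinearOrder R]
    [IsStrictOrderedRing R] [ExistsAddOfLE R] (s : Multiset ι) {w f : ι → R}
    (hw : ∀ i ∈ s, 0 ≤ w i) :
    (s.map fun i => w i * f i).sum ^ 2 ≤ (s.map w).sum * (s.map fun i => w i * f i ^ 2).sum := by
  classical
  simp only [Finset.sum_multiset_map_count, nsmul_eq_mul]
  refine Finset.sum_sq_le_sum_mul_sum_of_sq_le_mul _
    (fun i hi => mul_nonneg (Nat.cast_nonneg _) (hw i (Multiset.mem_toFinset.mp hi)))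
    (fun i hi => mul_nonneg (Nat.cast_nonneg _)
      (mul_nonneg (hw i (Multiset.mem_toFinset.mp hi)) (sq_nonneg _))) fun i _ => le_of_eq ?_
  ring

theorem sub_mul_one_add_le_of_sq_le_mul {T U φ δ C₁ C₂ : ℝ} (hδ : 0 ≤ δ)
    (hδφ : δ * (1 + φ) = 1) (hT : T ≤ φ) (hC₁ : 0 ≤ C₁) (hC₂ : 0 ≤ C₂) (hUT : U - T = δ * C₁)
    (hCS : C₁ ^ 2 ≤ T * C₂) : (U - T) * (1 + U) ≤ C₁ + δ * C₂ := by
  have key : C₁ * (U - φ) ≤ C₂ := calc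
    C₁ * (U - φ) ≤ C₁ * (U - T) := mul_le_mul_of_nonneg_left (by linarith) hC₁
    _ = δ * C₁ ^ 2 := by rw [hUT]; ring
    _ ≤ δ * (φ * C₂) := mul_le_mul_of_nonneg_left (hCS.trans (by gcongr)) hδ
    _ ≤ C₂ := by nlinarith
  have hexpand : (U - T) * (1 + U) - (C₁ + δ * C₂) = δ * (C₁ * (U - φ) - C₂) := by
    rw [hUT]
    linear_combination C₁ * hδφ
  linarith [mul_le_mul_of_nonneg_left key hδ]

theorem degree_oneSubD (p : ℝ[X]) : (oneSubD p).degree = p.degree := by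
  rcases eq_or_ne p 0 with rfl | hp
  · simp [oneSubD]
  · exact degree_sub_eq_left_of_degree_lt (degree_derivative_lt hp)

theorem natDegree_oneSubD (p : ℝ[X]) : (oneSubD p).natDegree = p.natDegree :=
  natDegree_eq_of_degree_eq (degree_oneSubD p)

theorem natDegree_oneSubD_iterate (p : ℝ[X]) (m : ℕ) :
    (oneSubD^[m] p).natDegree = p.natDegree := by
  induction m with
  | zero => rfl
  | succ m ih => rw [Function.iterate_succ_apply', natDegree_oneSubD, ih]

theorem oneSubD_ne_zero {p : ℝ[X]} (hp : p ≠ 0) : oneSubD p ≠ 0 := by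
  rw [← degree_ne_bot, degree_oneSubD, degree_ne_bot]
  exact hp

theorem rootMultiplicity_sub_one_le_rootMultiplicity_oneSubD (p : ℝ[X]) (x : ℝ) :
    p.rootMultiplicity x - 1 ≤ (oneSubD p).rootMultiplicity x := by
  rcases eq_or_ne p 0 with rfl | hp
  · simp [rootMultiplicity_zero]
  rw [le_rootMultiplicity_iff (oneSubD_ne_zero hp)]
  exact dvd_sub ((pow_dvd_pow _ (Nat.sub_le _ _)).trans (pow_rootMultiplicity_dvd p x))
    ((pow_dvd_pow _ (rootMultiplicity_sub_one_le_derivative_rootMultiplicity p x)).trans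
      (pow_rootMultiplicity_dvd _ x))

theorem hasDerivAt_exp_neg_mul_eval (p : ℝ[X]) (t : ℝ) :
    HasDerivAt (fun t => exp (-t) * p.eval t) (-(exp (-t) * (oneSubD p).eval t)) t := by
  refine (((hasDerivAt_neg t).exp).fun_mul (p.hasDerivAt t)).congr_deriv ?_
  simp only [oneSubD, eval_sub]
  ring

theorem exists_isRoot_oneSubD_mem_Ioo {p : ℝ[X]} {x y : ℝ} (hxy : x < y) (hx : p.IsRoot x)
    (hy : p.IsRoot y) : ∃ z ∈ Ioo x y, (oneSubD p).IsRoot z := by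
  obtain ⟨z, hz, hz0⟩ := exists_hasDerivAt_eq_zero hxy
    (fun t _ => (hasDerivAt_exp_neg_mul_eval p t).continuousAt.continuousWithinAt)
    (by simp [hx.eq_zero, hy.eq_zero]) fun t _ => hasDerivAt_exp_neg_mul_eval p t
  exact ⟨z, hz, by simpa [exp_ne_zero] using hz0⟩

theorem splits_oneSubD {p : ℝ[X]} (hp : p.Splits) : (oneSubD p).Splits := by
  rcases eq_or_ne p 0 with rfl | hp0
  · simp [oneSubD]
  apply splits_of_natDegree_le_card_roots_add_one
  rw [natDegree_oneSubD, ← splits_iff_card_roots.mp hp]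
  exact card_roots_le_card_roots_add_one_of_interleaved (oneSubD_ne_zero hp0)
    (rootMultiplicity_sub_one_le_rootMultiplicity_oneSubD p)
    fun x y hx hy hxy => exists_isRoot_oneSubD_mem_Ioo hxy hx hy

theorem splits_oneSubD_iterate {p : ℝ[X]} (hp : p.Splits) (m : ℕ) : (oneSubD^[m] p).Splits := by
  induction m with
  | zero => exact hp
  | succ m ih => rw [Function.iterate_succ_apply']; exact splits_oneSubD ih

/-- The lower barrier `Φ_p(b)`; for split `p` and `b` not a root it equals `-p'(b) / p(b)`. -/
noncomputable def lowerBarrier (p : ℝ[X]) (b : ℝ) : ℝ :=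
  (p.roots.map fun r => (r - b)⁻¹).sum

theorem lowerBarrier_nonneg {p : ℝ[X]} {b : ℝ} (hb : ∀ r ∈ p.roots, b ≤ r) :
    0 ≤ lowerBarrier p b :=
  Multiset.sum_nonneg <| Multiset.forall_mem_map_iff.mpr fun r hr =>
    inv_nonneg.mpr (sub_nonneg.mpr (hb r hr))

theorem lowerBarrier_X_pow (k : ℕ) (b : ℝ) : lowerBarrier (X ^ k) b = k * (-b)⁻¹ := by
  simp [lowerBarrier, Multiset.map_nsmul, Multiset.sum_nsmul]

namespace Polynomial.Splits

theorem eval_derivative_of_not_isRoot {p : ℝ[X]} (hp : p.Splits) {b : ℝ} (hb : ¬p.IsRoot b) :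
    eval b (derivative p) = -(eval b p * lowerBarrier p b) := by
  have hbR : b ∉ p.roots := fun h => hb (isRoot_of_mem_roots h)
  have h := hp.eq_prod_roots
  rw [lowerBarrier]
  generalize p.roots = R, p.leadingCoeff = c at hbR h
  rw [h, derivative_C_mul, eval_mul, eval_mul, eval_C, eval_derivative_multiset_prod_X_sub_C hbR]
  ring

theorem eval_derivative_derivative_of_not_isRoot {p : ℝ[X]} (hp : p.Splits) {b : ℝ}
    (hb : ¬p.IsRoot b) :
    eval b (derivative (derivative p)) =
      eval b p * (lowerBarrier p b ^ 2 - (p.roots.map fun r => (r - b)⁻¹ ^ 2).sum) := by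
  have hbR : b ∉ p.roots := fun h => hb (isRoot_of_mem_roots h)
  have h := hp.eq_prod_roots
  rw [lowerBarrier]
  generalize p.roots = R, p.leadingCoeff = c at hbR h
  rw [h, derivative_C_mul, derivative_C_mul, eval_mul, eval_mul, eval_C,
    eval_derivative_derivative_multiset_prod_X_sub_C hbR]
  ring

theorem eval_oneSubD_of_not_isRoot {p : ℝ[X]} (hp : p.Splits) {b : ℝ} (hb : ¬p.IsRoot b) :
    eval b (oneSubD p) = eval b p * (1 + lowerBarrier p b) := by
  rw [oneSubD, eval_sub, hp.eval_derivative_of_not_isRoot hb]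
  ring

theorem eval_derivative_oneSubD_of_not_isRoot {p : ℝ[X]} (hp : p.Splits) {b : ℝ}
    (hb : ¬p.IsRoot b) :
    eval b (derivative (oneSubD p)) = -(eval b p *
      (lowerBarrier p b + lowerBarrier p b ^ 2 - (p.roots.map fun r => (r - b)⁻¹ ^ 2).sum)) := by
  rw [oneSubD, derivative_sub, eval_sub, hp.eval_derivative_of_not_isRoot hb,
    hp.eval_derivative_derivative_of_not_isRoot hb]
  ring

end Polynomial.Splits

theorem lt_of_mem_roots_oneSubD {p : ℝ[X]} (hp : p.Splits) {c : ℝ}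
    (hc : ∀ r ∈ p.roots, c < r) :
    ∀ s ∈ (oneSubD p).roots, c < s := by
  intro s hs
  by_contra! hsc
  have hp0 : p ≠ 0 := by rintro rfl; simp [oneSubD] at hs
  have hps : ¬p.IsRoot s := fun h => (hc s ((mem_roots hp0).mpr h)).not_ge hsc
  have hbar : 0 ≤ lowerBarrier p s := lowerBarrier_nonneg fun r hr => hsc.trans (hc r hr).le
  have hqs : eval s (oneSubD p) = 0 := (mem_roots'.mp hs).2
  rw [hp.eval_oneSubD_of_not_isRoot hps] at hqs
  exact mul_ne_zero hps (by positivity) hqs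

theorem add_inv_one_add_lt_of_lowerBarrier_le {p : ℝ[X]} {b φ : ℝ}
    (hb : ∀ r ∈ p.roots, b < r) (hφ : lowerBarrier p b ≤ φ) :
    ∀ r ∈ p.roots, b + (1 + φ)⁻¹ < r := by
  intro r hr
  have hrb : 0 < r - b := sub_pos.mpr (hb r hr)
  have hterm : (r - b)⁻¹ ≤ lowerBarrier p b :=
    Multiset.single_le_sum (Multiset.forall_mem_map_iff.mpr fun s hs =>
      inv_nonneg.mpr (sub_pos.mpr (hb s hs)).le) _ (Multiset.mem_map_of_mem _ hr)
  have hlt : (r - b)⁻¹ < 1 + φ := by linarith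
  have hδ : (1 + φ)⁻¹ < r - b := (inv_lt_comm₀ hrb (by linarith [inv_pos.mpr hrb])).mp hlt
  linarith

/-- Dividing by `1 + Φ_p(b')`, `b' = b + 1 / (1 + φ)`, turns this into
`Φ_{(1 - D) p}(b') ≤ Φ_p(b)`. -/
theorem lowerBarrier_increment_mul_le {p : ℝ[X]} {b φ : ℝ} (hb : ∀ r ∈ p.roots, b < r)
    (hφ : lowerBarrier p b ≤ φ) :
    (lowerBarrier p (b + (1 + φ)⁻¹) - lowerBarrier p b) *
        (1 + lowerBarrier p (b + (1 + φ)⁻¹)) ≤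
      (p.roots.map fun r => (r - (b + (1 + φ)⁻¹))⁻¹ ^ 2).sum := by
  have hb' := add_inv_one_add_lt_of_lowerBarrier_le hb hφ
  have hφ0 : 0 ≤ φ := (lowerBarrier_nonneg fun r hr => (hb r hr).le).trans hφ
  set δ := (1 + φ)⁻¹
  have hδ0 : 0 ≤ δ := by positivity
  have hδφ : δ * (1 + φ) = 1 := inv_mul_cancel₀ (by positivity)
  set x : ℝ → ℝ := fun r => (r - b)⁻¹
  set u : ℝ → ℝ := fun r => (r - (b + δ))⁻¹
  have hx : ∀ r ∈ p.roots, 0 ≤ x r := fun r hr => inv_nonneg.mpr (sub_pos.mpr (hb r hr)).le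
  have hu : ∀ r ∈ p.roots, 0 ≤ u r := fun r hr => inv_nonneg.mpr (sub_pos.mpr (hb' r hr)).le
  have hxu : ∀ r ∈ p.roots, u r - x r = δ * (x r * u r) := fun r hr => by
    have := sub_pos.mpr (hb r hr)
    have := sub_pos.mpr (hb' r hr)
    simp only [x, u]
    field_simp
    ring
  set C₁ := (p.roots.map fun r => x r * u r).sum
  set C₂ := (p.roots.map fun r => x r * u r ^ 2).sum
  have hC₁ : 0 ≤ C₁ := Multiset.sum_nonneg <| Multiset.forall_mem_map_iff.mpr fun r hr =>
    mul_nonneg (hx r hr) (hu r hr)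
  have hC₂ : 0 ≤ C₂ := Multiset.sum_nonneg <| Multiset.forall_mem_map_iff.mpr fun r hr =>
    mul_nonneg (hx r hr) (sq_nonneg _)
  have hUT : lowerBarrier p (b + δ) - lowerBarrier p b = δ * C₁ := by
    rw [lowerBarrier, lowerBarrier, ← Multiset.sum_map_sub, ← Multiset.sum_map_mul_left]
    exact congrArg _ (Multiset.map_congr rfl hxu)
  have hB : (p.roots.map fun r => u r ^ 2).sum = C₁ + δ * C₂ := by
    rw [← Multiset.sum_map_mul_left, ← Multiset.sum_map_add]
    refine congrArg _ (Multiset.map_congr rfl fun r hr => ?_)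
    linear_combination u r * hxu r hr
  rw [hB]
  exact sub_mul_one_add_le_of_sq_le_mul hδ0 hδφ hφ hC₁ hC₂ hUT (Multiset.sq_sum_map_mul_le _ hx)

theorem lowerBarrier_oneSubD_le {p : ℝ[X]} (hp : p.Splits) {b φ : ℝ}
    (hb : ∀ r ∈ p.roots, b < r) (hφ : lowerBarrier p b ≤ φ) :
    lowerBarrier (oneSubD p) (b + (1 + φ)⁻¹) ≤ lowerBarrier p b := by
  rcases eq_or_ne p 0 with rfl | hp0
  · simp [oneSubD, lowerBarrier]
  have hb' := add_inv_one_add_lt_of_lowerBarrier_le hb hφ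
  have hroots := lt_of_mem_roots_oneSubD hp hb'
  set b' := b + (1 + φ)⁻¹
  have hpb' : ¬p.IsRoot b' := fun h => (hb' b' ((mem_roots hp0).mpr h)).false
  have hqb' : ¬(oneSubD p).IsRoot b' :=
    fun h => (hroots b' ((mem_roots (oneSubD_ne_zero hp0)).mpr h)).false
  have hU : 0 ≤ lowerBarrier p b' := lowerBarrier_nonneg fun r hr => (hb' r hr).le
  have hq := (splits_oneSubD hp).eval_derivative_of_not_isRoot hqb'
  rw [hp.eval_derivative_oneSubD_of_not_isRoot hpb', hp.eval_oneSubD_of_not_isRoot hpb'] at hq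
  have hV : lowerBarrier (oneSubD p) b' * (1 + lowerBarrier p b') = lowerBarrier p b' +
      lowerBarrier p b' ^ 2 - (p.roots.map fun r => (r - b')⁻¹ ^ 2).sum := by
    apply mul_left_cancel₀ hpb'
    linear_combination hq
  refine le_of_mul_le_mul_right ?_ (by linarith : 0 < 1 + lowerBarrier p b')
  linarith [lowerBarrier_increment_mul_le hb hφ]

theorem roots_oneSubD_iterate_gt_and_lowerBarrier_le {p : ℝ[X]} (hp : p.Splits) {b φ : ℝ}
    (hb : ∀ r ∈ p.roots, b < r) (hφ : lowerBarrier p b ≤ φ) (m : ℕ) :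
    (∀ r ∈ (oneSubD^[m] p).roots, b + m * (1 + φ)⁻¹ < r) ∧
      lowerBarrier (oneSubD^[m] p) (b + m * (1 + φ)⁻¹) ≤ φ := by
  induction m with
  | zero =>
    simp only [Function.iterate_zero_apply, CharP.cast_eq_zero, zero_mul, add_zero]
    exact ⟨hb, hφ⟩
  | succ m ih =>
    have hsplit := splits_oneSubD_iterate hp m
    rw [Function.iterate_succ_apply', Nat.cast_succ, add_one_mul, ← add_assoc]
    exact ⟨lt_of_mem_roots_oneSubD hsplit (add_inv_one_add_lt_of_lowerBarrier_le ih.1 ih.2),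
      (lowerBarrier_oneSubD_le hsplit ih.1 ih.2).trans ih.2⟩

theorem sq_sqrt_sub_sqrt_le_of_forall_lt {k n x : ℝ} (hk : 0 < k) (hkn : k ≤ n)
    (h : ∀ φ > 0, -(k / φ) + n * (1 + φ)⁻¹ < x) : (√n - √k) ^ 2 ≤ x := by
  obtain ⟨t, ht, rfl⟩ : ∃ t > 0, t ^ 2 = k := ⟨√k, sqrt_pos.mpr hk, sq_sqrt hk.le⟩
  have hn := hk.trans_le hkn
  obtain ⟨s, hs, rfl⟩ : ∃ s > 0, s ^ 2 = n := ⟨√n, sqrt_pos.mpr hn, sq_sqrt hn.le⟩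
  rw [sqrt_sq ht.le, sqrt_sq hs.le]
  rcases (pow_le_pow_iff_left₀ ht.le hs.le two_ne_zero).mp hkn |>.lt_or_eq with hts | rfl
  · have hst : 0 < s - t := sub_pos.mpr hts
    have hval : -(t ^ 2 / (t / (s - t))) + s ^ 2 * (1 + t / (s - t))⁻¹ = (s - t) ^ 2 := by
      field_simp
      ring
    exact hval ▸ (h _ (by positivity)).le
  · rw [sub_self, zero_pow two_ne_zero]
    by_contra! hx
    have hφ : 0 < t ^ 2 / -x := div_pos hk (neg_pos.mpr hx)
    have := h _ hφ
    rw [div_div_cancel₀ hk.ne', neg_neg] at this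
    have : 0 < t ^ 2 * (1 + t ^ 2 / -x)⁻¹ := mul_pos hk (inv_pos.mpr (by linarith))
    linarith

/-- **Lower bound for the roots of `(1-D)ⁿ x^k` (associated Laguerre
polynomials).**  For `1 ≤ k ≤ n`, the polynomial `(1-D)ⁿ x^k` has degree `k`,
is real-rooted, and all of its roots are at least
`(1 - √(k/n))² n = (√n - √k)²`. -/
theorem laguerre_smallest_root_bound (n k : ℕ) (hk1 : 1 ≤ k) (hkn : k ≤ n) :
    (oneSubD^[n] (Polynomial.X ^ k)).natDegree = k ∧
    RealRooted (oneSubD^[n] (Polynomial.X ^ k)) ∧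
    ∀ x ∈ (oneSubD^[n] (Polynomial.X ^ k)).roots,
      (Real.sqrt n - Real.sqrt k) ^ 2 ≤ x := by
  have hk : (0 : ℝ) < k := by exact_mod_cast hk1
  have hsplit : (X ^ k : ℝ[X]).Splits := Splits.X_pow k
  refine ⟨by rw [natDegree_oneSubD_iterate, natDegree_X_pow], splits_oneSubD_iterate hsplit n,
    fun x hx => sq_sqrt_sub_sqrt_le_of_forall_lt hk (by exact_mod_cast hkn) fun φ hφ => ?_⟩
  have hroots : ∀ r ∈ (X ^ k : ℝ[X]).roots, -(k / φ) < r := by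
    simp only [roots_X_pow, Multiset.mem_nsmul, Multiset.mem_singleton]
    intro r hr
    rw [hr.2, neg_lt_zero]
    positivity
  have hbar : lowerBarrier (X ^ k) (-(k / φ)) ≤ φ := by
    rw [lowerBarrier_X_pow, neg_neg, inv_div, mul_div_cancel₀ _ hk.ne']
  exact (roots_oneSubD_iterate_gt_and_lowerBarrier_le hsplit hroots hbar n).1 x hx
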